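/- The proof system EQ∞ is sound and complete for equality of infinite λ-terms: for all prefixed infinite λ-terms ()M and ()N, there exists a completed (possibly infinite) derivation in EQ∞ with conclusion ()M = ()N if and only if M = N (as α-equivalence classes of infinite preterms). -/

import Mathlib

/-- Node labels of (nameless, de Bruijn) infinite λ-terms. -/
inductive Lab : Type
  | lam : Lab
  | app : Lab
  | var : ℕ → Lab
deriving DecidableEq

/-- Which child positions a node with a given label may have. -/
def okChild : Lab → Bool → Prop
  | .lam, false => True
  | .app, _ => True
  | _, _ => False

/-- Infinite λ-terms (in nameless de Bruijn style), represented as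
labelled possibly-infinite binary trees given by their labelling function. -/
structure Tm : Type where
  lab : List Bool → Option Lab
  root : (lab []).isSome
  cons : ∀ p b, (lab (p ++ [b])).isSome ↔ ∃ l, lab p = some l ∧ okChild l b

namespace Tm

/-- Subterm at a position. -/
def sub (t : Tm) (p : List Bool) (h : (t.lab p).isSome) : Tm where
  lab q := t.lab (p ++ q)
  root := by simpa using h
  cons q b := by
    have h' := t.cons (p ++ q) b
    simpa [List.append_assoc] using h'

/-- Auxiliary: number of λ-labels strictly above, accumulating the prefix. -/
def ldepthAux (t : Tm) : List Bool → List Bool → ℕ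
  | _, [] => 0
  | pre, b :: p => (if t.lab pre = some .lam then 1 else 0) + t.ldepthAux (pre ++ [b]) p

/-- The number of λ-nodes strictly above position `p` in `t`. -/
def ldepth (t : Tm) (p : List Bool) : ℕ := t.ldepthAux [] p

end Tm

def shiftLab (σ : ℕ → ℕ) : Lab → Lab
  | .var k => .var (σ k)
  | l => l

theorem okChild_shiftLab (σ : ℕ → ℕ) (l : Lab) (b : Bool) :
    okChild (shiftLab σ l) b ↔ okChild l b := by
  cases l <;> cases b <;> simp [shiftLab, okChild]

/-- Relabel all variable nodes, depending on their λ-depth. -/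
def Tm.mapVar (t : Tm) (σ : ℕ → ℕ → ℕ) : Tm where
  lab p := (t.lab p).map (shiftLab (σ (t.ldepth p)))
  root := by
    have h := t.root
    cases hl : t.lab [] with
    | none => rw [hl] at h; simp at h
    | some l => simp [hl]
  cons p b := by
    constructor
    · intro hs
      have hs' : (t.lab (p ++ [b])).isSome := by simpa using hs
      obtain ⟨l', hl', hok⟩ := (t.cons p b).1 hs'
      exact ⟨shiftLab (σ (t.ldepth p)) l', by simp [hl'],
        (okChild_shiftLab _ _ _).2 hok⟩
    · rintro ⟨l', hl', hok⟩
      obtain ⟨l, hl, hfl⟩ := Option.map_eq_some_iff.mp (by simpa using hl')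
      have hok' : okChild l b := by
        have := hfl ▸ hok
        exact (okChild_shiftLab (σ (t.ldepth p)) l b).1 this
      have hs : (t.lab (p ++ [b])).isSome := (t.cons p b).2 ⟨l, hl, hok'⟩
      simpa using hs

/-- The term consisting of a single variable node with index 0. -/
def var0Tm : Tm where
  lab p := if p = [] then some (.var 0) else none
  root := by simp
  cons p b := by
    constructor
    · intro h
      simp only [List.append_eq_nil_iff] at h
      simp at h
    · rintro ⟨l, hl, hok⟩
      by_cases hp : p = []
      · subst hp
        simp only [if_pos rfl, Option.some.injEq] at hl
        cases hl
        cases b <;> simp [okChild] at hok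
      · simp [hp] at hl

/-- The last-but-`j` abstraction-prefix variable occurs in `t`
(at λ-depth `d` inside the term it has de Bruijn index `j + d`). -/
def OccursJ (j : ℕ) (t : Tm) : Prop := ∃ p, t.lab p = some (.var (j + t.ldepth p))

/-- Remove the prefix variable with base index `j` from the de Bruijn indexing. -/
def downJ (j : ℕ) (t : Tm) : Tm := t.mapVar (fun d k => if j + d < k then k - 1 else k)

/-- The last abstraction-prefix variable occurs. -/
def occurs0 : Tm → Prop := OccursJ 0

/-- Remove the (vacuous) last abstraction-prefix variable. -/
def down0 : Tm → Tm := downJ 0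

/-- `t` has no free variables pointing outside the term itself. -/
def ClosedTm (t : Tm) : Prop := ∀ p k, t.lab p = some (.var k) → k < t.ldepth p

/-- Sequents: a prefix length together with an infinite λ-term. -/
abbrev TSeq : Type := ℕ × Tm

/-- λ-decomposition step of the ARS `Reg⁺`. -/
def SLam (s s' : TSeq) : Prop :=
  s.2.lab [] = some .lam ∧ s'.1 = s.1 + 1 ∧
    ∃ h : (s.2.lab [false]).isSome, s'.2 = s.2.sub [false] h

/-- Left application-decomposition step. -/
def SApp0 (s s' : TSeq) : Prop :=
  s.2.lab [] = some .app ∧ s'.1 = s.1 ∧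
    ∃ h : (s.2.lab [false]).isSome, s'.2 = s.2.sub [false] h

/-- Right application-decomposition step. -/
def SApp1 (s s' : TSeq) : Prop :=
  s.2.lab [] = some .app ∧ s'.1 = s.1 ∧
    ∃ h : (s.2.lab [true]).isSome, s'.2 = s.2.sub [true] h

/-- Vacuous-prefix removal step (removal of the last prefix variable). -/
def SDel (s s' : TSeq) : Prop :=
  s.1 = s'.1 + 1 ∧ ¬ occurs0 s.2 ∧ s'.2 = down0 s.2

/-- The scope⁺-decomposition ARS `Reg⁺` on prefixed infinite λ-terms. -/
def Step (s s' : TSeq) : Prop := SLam s s' ∨ SApp0 s s' ∨ SApp1 s s' ∨ SDel s s'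

/-- A (scope⁺-delimiting) strategy for the ARS `Reg⁺`: a sub-ARS with the
same objects and the same normal forms. -/
def Strategy (S : TSeq → TSeq → Prop) : Prop :=
  (∀ a b, S a b → Step a b) ∧ (∀ a, (∃ b, Step a b) → ∃ b, S a b)

/-- An infinite λ-term is strongly regular if some scope⁺-delimiting strategy
reaches only finitely many sequents from it. -/
def StronglyRegular (M : Tm) : Prop :=
  ∃ S : TSeq → TSeq → Prop, Strategy S ∧ {s | Relation.ReflTransGen S (0, M) s}.Finite

/-- A relation on sequents is *backward-closed* under the rules of the
coinductive proof system `EQ∞`: every related pair of sequents is the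
conclusion of an instance of one of the rules (axiom, λ, @, del) all of whose
premises are again related.  The existence of such a relation containing a
pair is equivalent to the existence of a completed (possibly infinite)
`EQ∞`-derivation of the corresponding equation. -/
def EqInv (R : TSeq → TSeq → Prop) : Prop :=
  ∀ s u, R s u →
    (1 ≤ s.1 ∧ 1 ≤ u.1 ∧ s.2 = var0Tm ∧ u.2 = var0Tm) ∨
    (∃ (ht : (s.2.lab [false]).isSome) (hu : (u.2.lab [false]).isSome),
      s.2.lab [] = some .lam ∧ u.2.lab [] = some .lam ∧
      R (s.1 + 1, s.2.sub [false] ht) (u.1 + 1, u.2.sub [false] hu)) ∨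
    (∃ (ht0 : (s.2.lab [false]).isSome) (ht1 : (s.2.lab [true]).isSome)
       (hu0 : (u.2.lab [false]).isSome) (hu1 : (u.2.lab [true]).isSome),
      s.2.lab [] = some .app ∧ u.2.lab [] = some .app ∧
      R (s.1, s.2.sub [false] ht0) (u.1, u.2.sub [false] hu0) ∧
      R (s.1, s.2.sub [true] ht1) (u.1, u.2.sub [true] hu1)) ∨
    (∃ n m, s.1 = n + 1 ∧ u.1 = m + 1 ∧ ¬ occurs0 s.2 ∧ ¬ occurs0 u.2 ∧
      R (n, down0 s.2) (m, down0 u.2))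

/-!
Soundness: an `EqInv` relation forces the two terms to agree at every position `p`, by induction on
the length of `p` with an inner induction on the prefix length for the `del` rule; `del` loses no
information, since `down0` is injective on terms in which the last prefix variable does not occur.
Completeness: equality restricted to terms whose free variables are all bound by the prefix is
itself `EqInv`, the rule applied at each sequent being read off the root label.
-/

namespace Tm

theorem ext {t u : Tm} (h : ∀ p, t.lab p = u.lab p) : t = u := by
  obtain ⟨lt, _, _⟩ := t
  obtain ⟨lu, _, _⟩ := u
  obtain rfl : lt = lu := funext h
  rfl

theorem lab_append_eq_none (t : Tm) {p : List Bool} (h : t.lab p = none) (q : List Bool) :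
    t.lab (p ++ q) = none := by
  induction q using List.reverseRecOn with
  | nil => simpa using h
  | append_singleton q b ih =>
    rw [← List.append_assoc, ← Option.not_isSome_iff_eq_none, t.cons, ih]
    simp

theorem lab_singleton_isSome (t : Tm) {l : Lab} {b : Bool} (h : t.lab [] = some l)
    (hb : okChild l b) : (t.lab [b]).isSome := by
  simpa using (t.cons [] b).2 ⟨l, h, hb⟩

theorem lab_singleton_eq_none (t : Tm) {l : Lab} {b : Bool} (h : t.lab [] = some l)
    (hb : ¬ okChild l b) : t.lab [b] = none := by
  rw [← Option.not_isSome_iff_eq_none, ← List.nil_append [b], t.cons, h]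
  simpa using hb

theorem lab_eq_none_of_lab_nil_eq_var {t : Tm} {k : ℕ} (h : t.lab [] = some (.var k)) :
    ∀ {p : List Bool}, p ≠ [] → t.lab p = none
  | b :: q, _ => t.lab_append_eq_none (t.lab_singleton_eq_none h (by cases b <;> exact id)) q

theorem eq_var0Tm_of_lab_nil {t : Tm} (h : t.lab [] = some (.var 0)) : t = var0Tm := by
  refine Tm.ext fun p => ?_
  by_cases hp : p = []
  · subst hp
    simp [h, var0Tm]
  · simp [lab_eq_none_of_lab_nil_eq_var h hp, var0Tm, hp]

theorem ldepth_nil (t : Tm) : t.ldepth [] = 0 := rfl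

theorem ldepthAux_sub (t : Tm) (r : List Bool) (h : (t.lab r).isSome) (p pre : List Bool) :
    (t.sub r h).ldepthAux pre p = t.ldepthAux (r ++ pre) p := by
  induction p generalizing pre with
  | nil => rfl
  | cons b p ih =>
    simp only [ldepthAux]
    rw [ih, ← List.append_assoc]
    rfl

theorem ldepth_cons (t : Tm) (b : Bool) (p : List Bool) (h : (t.lab [b]).isSome) :
    t.ldepth (b :: p) = (if t.lab [] = some .lam then 1 else 0) + (t.sub [b] h).ldepth p := by
  rw [ldepth, ldepthAux, ldepth, ldepthAux_sub]
  rfl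

theorem ldepthAux_mapVar (t : Tm) (σ : ℕ → ℕ → ℕ) (p pre : List Bool) :
    (t.mapVar σ).ldepthAux pre p = t.ldepthAux pre p := by
  induction p generalizing pre with
  | nil => rfl
  | cons b p ih =>
    simp only [ldepthAux, ih]
    congr 1
    show (if (t.lab pre).map (shiftLab _) = some .lam then 1 else 0) = _
    rcases t.lab pre with _ | (_ | _ | _) <;> simp [shiftLab]

theorem ldepth_down0 (t : Tm) (p : List Bool) : (down0 t).ldepth p = t.ldepth p :=
  ldepthAux_mapVar t (fun d k => if 0 + d < k then k - 1 else k) p []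

theorem lab_down0 (t : Tm) (p : List Bool) :
    (down0 t).lab p = (t.lab p).map (shiftLab fun k => if t.ldepth p < k then k - 1 else k) := by
  simp [down0, downJ, mapVar]

theorem ldepthAux_congr {t u : Tm} {p pre : List Bool}
    (h : ∀ q : List Bool, q.length < p.length → t.lab (pre ++ q) = u.lab (pre ++ q)) :
    t.ldepthAux pre p = u.ldepthAux pre p := by
  induction p generalizing pre with
  | nil => rfl
  | cons b p ih =>
    have hroot : t.lab pre = u.lab pre := by simpa using h [] (by simp)
    rw [ldepthAux, ldepthAux, hroot, ih]
    intro q hq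
    simpa using h (b :: q) (by simpa using hq)

def AgreeBelow (k : ℕ) (t u : Tm) : Prop :=
  ∀ p : List Bool, p.length < k → t.lab p = u.lab p

theorem AgreeBelow.ldepth_eq {t u : Tm} {p : List Bool} (h : AgreeBelow p.length t u) :
    t.ldepth p = u.ldepth p :=
  ldepthAux_congr fun q hq => by simpa using h q hq

theorem AgreeBelow.succ_of_children {k : ℕ} {t u : Tm} (hroot : t.lab [] = u.lab [])
    (hchild : ∀ b q, q.length < k → t.lab (b :: q) = u.lab (b :: q)) :
    AgreeBelow (k + 1) t u
  | [], _ => hroot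
  | b :: q, hq => hchild b q (by simpa using hq)

theorem shiftLab_down_injective {d : ℕ} {l l' : Lab} (hl : l ≠ .var d) (hl' : l' ≠ .var d)
    (h : shiftLab (fun k => if d < k then k - 1 else k) l =
      shiftLab (fun k => if d < k then k - 1 else k) l') : l = l' := by
  cases l <;> cases l' <;> simp only [shiftLab, reduceCtorEq, ne_eq, Lab.var.injEq] at h hl hl' ⊢
  split_ifs at h <;> omega

theorem AgreeBelow.of_down0 {k : ℕ} {t u : Tm} (ht : ¬ occurs0 t) (hu : ¬ occurs0 u)
    (h : AgreeBelow k (down0 t) (down0 u)) : AgreeBelow k t u := by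
  intro p hp
  have hd : t.ldepth p = u.ldepth p := by
    rw [← ldepth_down0 t, ← ldepth_down0 u]
    exact AgreeBelow.ldepth_eq fun q hq => h q (hq.trans hp)
  have hlab := h p hp
  rw [lab_down0, lab_down0, hd] at hlab
  have hvar : ∀ {s : Tm}, ¬ occurs0 s → ∀ {l}, s.lab p = some l → l ≠ .var (s.ldepth p) :=
    fun hs l hl he => hs ⟨p, by simp [hl, he]⟩
  cases hlt : t.lab p <;> cases hlu : u.lab p <;> simp only [hlt, hlu, Option.map_some,
    Option.map_none, reduceCtorEq, Option.some.injEq] at hlab ⊢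
  exact shiftLab_down_injective (hd ▸ hvar ht hlt) (hvar hu hlu) hlab

/-- Every variable of `t` is bound either inside `t` or by one of `n` prefix abstractions. -/
def WellScoped (n : ℕ) (t : Tm) : Prop :=
  ∀ p k, t.lab p = some (.var k) → k < n + t.ldepth p

theorem wellScoped_zero_iff_closedTm {t : Tm} : WellScoped 0 t ↔ ClosedTm t := by
  simp [WellScoped, ClosedTm]

theorem WellScoped.sub {n : ℕ} {t : Tm} (h : WellScoped n t) (b : Bool) (hb : (t.lab [b]).isSome) :
    WellScoped (n + if t.lab [] = some .lam then 1 else 0) (t.sub [b] hb) := by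
  intro p k hk
  have := h (b :: p) k hk
  rw [ldepth_cons t b p hb] at this
  omega

theorem WellScoped.down0 {n : ℕ} {t : Tm} (h : WellScoped (n + 1) t) (ht : ¬ occurs0 t) :
    WellScoped n (down0 t) := by
  intro p k hk
  rw [lab_down0] at hk
  obtain ⟨l, hl, hkl⟩ := Option.map_eq_some_iff.mp hk
  cases l with
  | var j =>
    have hj := h p j hl
    have hne : j ≠ t.ldepth p := fun he => ht ⟨p, by simp [hl, he]⟩
    simp only [shiftLab, Lab.var.injEq] at hkl
    rw [ldepth_down0]
    split_ifs at hkl <;> omega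
  | _ => simp [shiftLab] at hkl

theorem WellScoped.lt_of_lab_nil {n k : ℕ} {t : Tm} (h : WellScoped n t)
    (hk : t.lab [] = some (.var k)) : k < n := by
  simpa [ldepth_nil] using h [] k hk

theorem not_occurs0_of_lab_nil {t : Tm} {j : ℕ} (h : t.lab [] = some (.var (j + 1))) :
    ¬ occurs0 t := by
  rintro ⟨p, hp⟩
  by_cases hp0 : p = []
  · subst hp0
    simp [h, ldepth_nil] at hp
  · simp [lab_eq_none_of_lab_nil_eq_var h hp0] at hp

end Tm

open Tm

theorem EqInv.agreeBelow {R : TSeq → TSeq → Prop} (hR : EqInv R) (k : ℕ) :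
    ∀ {n m : ℕ} {t u : Tm}, R (n, t) (m, u) → AgreeBelow k t u := by
  induction k with
  | zero => intro _ _ _ _ _ p hp; simp at hp
  | succ k ihk =>
    intro n
    induction n using Nat.strong_induction_on with
    | _ n ihn =>
      intro m t u hr
      rcases hR _ _ hr with ⟨-, -, ht, hu⟩ | ⟨_, _, hlt, hlu, hsub⟩ |
        ⟨_, _, _, _, hlt, hlu, hsub0, hsub1⟩ | ⟨n', m', hn, -, ht, hu, hdown⟩
      · dsimp only at ht hu
        rw [ht, hu]
        exact fun _ _ => rfl
      · refine AgreeBelow.succ_of_children (hlt.trans hlu.symm) fun b q hq => ?_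
        cases b
        · exact ihk hsub q hq
        · exact (t.lab_append_eq_none (t.lab_singleton_eq_none hlt id) q).trans
            (u.lab_append_eq_none (u.lab_singleton_eq_none hlu id) q).symm
      · refine AgreeBelow.succ_of_children (hlt.trans hlu.symm) fun b q hq => ?_
        cases b
        · exact ihk hsub0 q hq
        · exact ihk hsub1 q hq
      · exact (ihn n' (by dsimp only at hn; omega) hdown).of_down0 ht hu

theorem EqInv.eq {R : TSeq → TSeq → Prop} (hR : EqInv R) {n m : ℕ} {t u : Tm}
    (h : R (n, t) (m, u)) : t = u :=
  Tm.ext fun p => hR.agreeBelow (p.length + 1) h p (Nat.lt_succ_self _)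

theorem eqInv_diag : EqInv fun s u => s = u ∧ WellScoped s.1 s.2 := by
  rintro ⟨n, t⟩ _ ⟨rfl, hc⟩
  dsimp only
  obtain ⟨l, hl⟩ := Option.isSome_iff_exists.mp t.root
  cases l with
  | lam =>
    have hb := t.lab_singleton_isSome hl (b := false) trivial
    exact Or.inr <| Or.inl ⟨hb, hb, hl, hl, rfl, by simpa [hl] using hc.sub false hb⟩
  | app =>
    have hb0 := t.lab_singleton_isSome hl (b := false) trivial
    have hb1 := t.lab_singleton_isSome hl (b := true) trivial
    exact Or.inr <| Or.inr <| Or.inl ⟨hb0, hb1, hb0, hb1, hl, hl,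
      ⟨rfl, by simpa [hl] using hc.sub false hb0⟩, ⟨rfl, by simpa [hl] using hc.sub true hb1⟩⟩
  | var k =>
    have hk := hc.lt_of_lab_nil hl
    cases k with
    | zero =>
      have ht := eq_var0Tm_of_lab_nil hl
      exact Or.inl ⟨hk, hk, ht, ht⟩
    | succ j =>
      obtain ⟨n, rfl⟩ : ∃ n', n = n' + 1 := ⟨n - 1, by omega⟩
      have hocc := not_occurs0_of_lab_nil hl
      exact Or.inr <| Or.inr <| Or.inr ⟨n, n, rfl, rfl, hocc, hocc, rfl, hc.down0 hocc⟩

theorem stmt11_general (M N : Tm) (hM : ClosedTm M) :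
    (∃ R : TSeq → TSeq → Prop, EqInv R ∧ R ((0 : ℕ), M) ((0 : ℕ), N)) ↔ M = N := by
  constructor
  · rintro ⟨R, hR, hMN⟩
    exact hR.eq hMN
  · rintro rfl
    exact ⟨_, eqInv_diag, rfl, wellScoped_zero_iff_closedTm.mpr hM⟩

/-- The proof system `EQ∞` is sound and complete for
equality of infinite λ-terms: there is a completed (possibly infinite)
`EQ∞`-derivation with conclusion `() M = () N` if and only if `M = N`. -/
theorem stmt11 (M N : Tm) (hM : ClosedTm M) (hN : ClosedTm N) :
    (∃ R : TSeq → TSeq → Prop, EqInv R ∧ R ((0 : ℕ), M) ((0 : ℕ), N)) ↔ M = N :=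
  stmt11_general M N hM
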